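/- Let F, K be real numbers with K > 0. Define L := max[(2F² − K)/(2F² + K), 0]. Then in all cases |−2F·(1−L)/(1+L)|² ≤ 2K. -/
import Mathlib


theorem stmt_5 (F K : ℝ) (hK : 0 < K) :
    (-(2 * F) * (1 - max ((2 * F^2 - K) / (2 * F^2 + K)) 0)
        / (1 + max ((2 * F^2 - K) / (2 * F^2 + K)) 0))^2 ≤ 2 * K := by
  have hden : 0 < 2 * F^2 + K := by positivity
  rcases le_or_gt (2 * F^2) K with h | h
  · have hmax : max ((2 * F^2 - K) / (2 * F^2 + K)) 0 = 0 := by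
      apply max_eq_right
      apply div_nonpos_of_nonpos_of_nonneg <;> linarith
    rw [hmax]
    have : (-(2 * F) * (1 - 0) / (1 + 0))^2 = 4 * F^2 := by ring
    rw [this]; linarith
  · have hF : F ≠ 0 := by
      intro h0; rw [h0] at h; norm_num at h; linarith
    have hmax : max ((2 * F^2 - K) / (2 * F^2 + K)) 0 = (2 * F^2 - K) / (2 * F^2 + K) := by
      apply max_eq_left
      apply div_nonneg (by linarith) (by linarith)
    rw [hmax]
    have h1 : 1 - (2 * F^2 - K) / (2 * F^2 + K) = 2 * K / (2 * F^2 + K) := by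
      field_simp; ring
    have h2 : 1 + (2 * F^2 - K) / (2 * F^2 + K) = 4 * F^2 / (2 * F^2 + K) := by
      field_simp; ring
    rw [h1, h2]
    have hF2 : (0:ℝ) < F^2 := by positivity
    have : -(2 * F) * (2 * K / (2 * F^2 + K)) / (4 * F^2 / (2 * F^2 + K)) = -K / F := by
      field_simp; ring
    rw [this]
    have : (-K / F)^2 = K^2 / F^2 := by rw [div_pow]; ring_nf
    rw [this, div_le_iff₀ hF2]
    nlinarith
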